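/- Under the standing assumptions, if ⋂_{n≥1} Pⁿ = 0 then every element of 1 + P is a unit of R, every element of C(P) = {x ∈ R | x + P is a regular element of R/P} is regular in R, and C(P) satisfies the left and right Ore conditions. -/

import Mathlib

open Pointwise

/-- `P` is a two-sided ideal of the subring `R` of `A`. -/
def IsIdealOf {A : Type*} [Ring A] (R : Subring A) (P : Set A) : Prop :=
  P ⊆ (R : Set A) ∧ (0 : A) ∈ P ∧ (∀ x ∈ P, ∀ y ∈ P, x + y ∈ P) ∧ (∀ x ∈ P, -x ∈ P) ∧
    (∀ r ∈ R, ∀ p ∈ P, r * p ∈ P) ∧ (∀ r ∈ R, ∀ p ∈ P, p * r ∈ P)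

/-- `(R, P)` is a prime in the ring `A`. -/
def IsPrimeIn {A : Type*} [Ring A] (R : Subring A) (P : Set A) : Prop :=
  IsIdealOf R P ∧ ∀ x y : A, (∀ r ∈ R, x * r * y ∈ P) → x ∈ P ∨ y ∈ P

/-- `(R, P)` is a strict fractional prime in the ring `A`. -/
def IsStrictFractionalPrime {A : Type*} [Ring A] (R : Subring A) (P : Set A) : Prop :=
  IsPrimeIn R P ∧ ∀ r : A, r ≠ 0 → ∃ x ∈ R, ∃ y ∈ R, x * r * y ≠ 0 ∧ x * r * y ∈ R

/-- The set of elements of the subring `R` which are regular in `R`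
(non-zero-divisors of the ring `R`). -/
def regularIn {A : Type*} [Ring A] (R : Subring A) : Set A :=
  {x : A | x ∈ R ∧ (∀ y ∈ R, x * y = 0 → y = 0) ∧ (∀ y ∈ R, y * x = 0 → y = 0)}

/-- A ring is Goldie if its set of regular elements satisfies the left and right Ore
conditions and the corresponding Ore localization is a semisimple ring. -/
def IsGoldieRing (R : Type*) [Ring R] : Prop :=
  (∀ (r : R), ∀ s ∈ nonZeroDivisors R, ∃ r' : R, ∃ s' ∈ nonZeroDivisors R, s' * r = r' * s) ∧
  (∀ (r : R), ∀ s ∈ nonZeroDivisors R, ∃ r' : R, ∃ s' ∈ nonZeroDivisors R, r * s' = s * r') ∧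
  ∃ _i : OreLocalization.OreSet (nonZeroDivisors R),
    IsSemisimpleRing (OreLocalization (nonZeroDivisors R) R)

/-- `A^P`, the set of elements of `A` stabilizing `P` on both sides. -/
def stabilizerSet {A : Type*} [Ring A] (P : Set A) : Set A :=
  {a : A | (∀ p ∈ P, a * p ∈ P) ∧ ∀ p ∈ P, p * a ∈ P}

/-- The fractional `R`-ideals of `A`. -/
def IsFractionalIdeal {A : Type*} [Ring A] (R : Subring A) (I : Set A) : Prop :=
  ((0 : A) ∈ I ∧ (∀ x ∈ I, ∀ y ∈ I, x + y ∈ I) ∧ (∀ x ∈ I, -x ∈ I)) ∧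
  (∀ r ∈ R, ∀ x ∈ I, r * x ∈ I) ∧ (∀ r ∈ R, ∀ x ∈ I, x * r ∈ I) ∧
  (∃ u ∈ I, u ∈ regularIn R) ∧ (∃ r ∈ regularIn R, ∀ x ∈ I, r * x ∈ (R : Set A))

/-- The fractional ideal `RaR` generated by an element `a ∈ A`. -/
def genFracIdeal {A : Type*} [Ring A] (R : Subring A) (a : A) : Set A :=
  (R : Set A) * {a} * (R : Set A)

/-- `v(I) = (P : I) = {a ∈ A ∣ aI ⊆ P}`. -/
def vP {A : Type*} [Ring A] (P I : Set A) : Set A :=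
  {a : A | ∀ x ∈ I, a * x ∈ P}

/-- The additive subgroup generated by the `n`-fold products of elements of `P`. -/
def idealPow {A : Type*} [Ring A] (P : Set A) (n : ℕ) : Set A :=
  (AddSubgroup.closure (P ^ n) : Set A)

/-- `C(P)`: the elements of `R` which are regular modulo `P`. -/
def CP {A : Type*} [Ring A] (R : Subring A) (P : Set A) : Set A :=
  {x : A | x ∈ R ∧ (∀ y ∈ R, x * y ∈ P → y ∈ P) ∧ ∀ y ∈ R, y * x ∈ P → y ∈ P}

/-- `R` is an order in `A`: every regular element of `R` is invertible in `A` and every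
element of `A` is of the form `s⁻¹ * r` and of the form `r' * s'⁻¹` with `r, r' ∈ R` and
`s, s'` regular in `R`. -/
def IsOrderIn {A : Type*} [Ring A] (R : Subring A) : Prop :=
  (∀ s ∈ regularIn R, IsUnit s) ∧
  (∀ a : A, ∃ s ∈ regularIn R, ∃ r ∈ (R : Set A), s * a = r) ∧
  (∀ a : A, ∃ s ∈ regularIn R, ∃ r ∈ (R : Set A), a * s = r)

/-- `R` is a Dubrovin valuation ring of `A` with associated ideal `P`:
`P` is a two-sided ideal of `R` such that `R/P` is a simple Artinian ring and for every
`a ∈ A \ R` there are `x, y ∈ R` with `xa ∈ R \ P` and `ay ∈ R \ P`. -/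
def IsDubrovinValuation {A : Type*} [Ring A] (R : Subring A) (P : Set A) : Prop :=
  IsIdealOf R P ∧
  (∀ Q : TwoSidedIdeal R, (∀ x : R, x ∈ Q ↔ (x : A) ∈ P) →
    IsSimpleRing Q.ringCon.Quotient ∧ IsArtinianRing Q.ringCon.Quotient) ∧
  ∀ a : A, a ∉ R →
    (∃ x ∈ R, x * a ∈ R ∧ x * a ∉ P) ∧ (∃ y ∈ R, a * y ∈ R ∧ a * y ∉ P)

/-- `P` coincides with the Jacobson radical of the subring `R` (the intersection of the
maximal left ideals of `R`). -/
def IsJacobsonRadicalOf {A : Type*} [Ring A] (R : Subring A) (P : Set A) : Prop :=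
  ∀ x : R, (x : A) ∈ P ↔ x ∈ (⊥ : Ideal R).jacobson

/-!
Since `A` is semisimple, every `c ∈ C(P)` is von Neumann regular: `c a c = c` for some `a ∈ A`.
The idempotent `k = 1 - a c` satisfies `c k = 0`, and for every `x ∈ A` the element
`n = k x (1 - k)` squares to zero. Then `1 + n` and `1 - n` are mutually inverse units of `A`
lying outside `P`, and conjugation invariance of `P` together with primeness forces the inverse
of a unit outside `P` into `R = A^P`; so `n ∈ R`, and `c n = 0` gives `n ∈ P`. Thus
`k A (1 - k) ⊆ P`, whence `k ∈ P` or `1 - k ∈ P`. As `⋂ Pⁿ = 0`, no nonzero idempotent lies in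
`P`, so `k = 0` and `c` is a unit of `A`. Everything else follows: units are regular,
`c r c⁻¹ ∈ R` gives the Ore conditions with the same denominator `c`, and `1 + p ∈ C(P)` is a
unit outside `P`, so its inverse lies in `R`.
-/

theorem IsSemisimpleRing.exists_mul_mul_eq_self {A : Type*} [Ring A] [IsSemisimpleRing A]
    (c : A) : ∃ a, c * a * c = c := by
  obtain ⟨D, hD⟩ := exists_isCompl (Submodule.span A {c})
  let π := Submodule.projectionOnto _ D hD
  obtain ⟨a, ha⟩ := Submodule.mem_span_singleton.mp (π 1).2
  have hπc : (π c : A) = c :=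
    congrArg Subtype.val
      (Submodule.projectionOnto_apply_left hD ⟨c, Submodule.mem_span_singleton_self c⟩)
  -- `π` is `A`-linear, hence right multiplication by `π 1 = a c`
  refine ⟨a, ?_⟩
  calc c * a * c = ((c • π 1 : Submodule.span A {c}) : A) := by
        rw [mul_assoc, ← smul_eq_mul a, ha]; rfl
    _ = c := by rw [← map_smul, smul_eq_mul, mul_one, hπc]

section

variable {A : Type*} [Ring A] {R : Subring A} {P : Set A}

theorem IsIdempotentElem.eq_zero_of_mem (hint : ⋂ n : ℕ, idealPow P (n + 1) ⊆ {0}) {e : A}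
    (he : IsIdempotentElem e) (heP : e ∈ P) : e = 0 :=
  hint <| Set.mem_iInter.mpr fun n =>
    AddSubgroup.subset_closure (he.pow_succ_eq n ▸ Set.pow_mem_pow heP)

theorem one_notMem_of_iInter_idealPow_subset [Nontrivial A]
    (hint : ⋂ n : ℕ, idealPow P (n + 1) ⊆ {0}) : (1 : A) ∉ P :=
  fun h => one_ne_zero (IsIdempotentElem.one.eq_zero_of_mem hint h)

theorem notMem_of_mem_CP (hone : (1 : A) ∉ P) {c : A} (hc : c ∈ CP R P) : c ∉ P :=
  fun h => hone (hc.2.1 1 R.one_mem (by rwa [mul_one]))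

theorem IsIdealOf.one_add_mem_CP (hP : IsIdealOf R P) {p : A} (hp : p ∈ P) :
    1 + p ∈ CP R P := by
  obtain ⟨hPR, -, hadd, hneg, hmulL, hmulR⟩ := hP
  refine ⟨R.add_mem R.one_mem (hPR hp), fun y hy h => ?_, fun y hy h => ?_⟩
  · rw [show y = (1 + p) * y + -(p * y) by noncomm_ring]
    exact hadd _ h _ (hneg _ (hmulR y hy p hp))
  · rw [show y = y * (1 + p) + -(y * p) by noncomm_ring]
    exact hadd _ h _ (hneg _ (hmulL y hy p hp))

theorem IsIdealOf.one_add_notMem_of_mul_self_eq_zero (hP : IsIdealOf R P) (hone : (1 : A) ∉ P)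
    {m : A} (hm : m * m = 0) : 1 + m ∉ P := by
  obtain ⟨hPR, -, hadd, hneg, hmulL, -⟩ := hP
  intro h
  apply hone
  -- `(1 + m)² = 2 (1 + m) - 1`
  rw [show (1 : A) = (1 + m) + (1 + m) + -((1 + m) * (1 + m)) by
    rw [show (1 + m) * (1 + m) = 1 + m + m + m * m by noncomm_ring, hm]; abel]
  exact hadd _ (hadd _ h _ h) _ (hneg _ (hmulL _ (hPR h) _ h))

theorem conj_mem_stabilizerSet (hinv : ∀ u : Aˣ, ∀ p ∈ P, (u : A) * p * (↑u⁻¹ : A) ∈ P)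
    (u : Aˣ) {r : A} (hr : r ∈ stabilizerSet P) : (u : A) * r * ↑u⁻¹ ∈ stabilizerSet P := by
  have hconj : ∀ p ∈ P, (↑u⁻¹ : A) * p * u ∈ P := fun p hp => by
    simpa using hinv u⁻¹ p hp
  refine ⟨fun p hp => ?_, fun p hp => ?_⟩
  · simpa [mul_assoc] using hinv u _ (hr.1 _ (hconj p hp))
  · simpa [mul_assoc] using hinv u _ (hr.2 _ (hconj p hp))

theorem IsPrimeIn.inv_mem_of_notMem (hP : IsPrimeIn R P) (hRP : (R : Set A) = stabilizerSet P)
    (hinv : ∀ u : Aˣ, ∀ p ∈ P, (u : A) * p * (↑u⁻¹ : A) ∈ P) {u : Aˣ} (hu : (u : A) ∉ P) :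
    (↑u⁻¹ : A) ∈ R := by
  -- `u R (u⁻¹ q) = (u R u⁻¹) q ⊆ P`
  have hleft : ∀ q ∈ P, (↑u⁻¹ : A) * q ∈ P := fun q hq =>
    (hP.2 _ _ fun r hr => by
      simpa [mul_assoc] using (conj_mem_stabilizerSet hinv u (hRP.subset hr)).1 q hq).resolve_left hu
  refine hRP.ge ⟨hleft, fun q hq => ?_⟩
  simpa [mul_assoc] using hleft _ (hinv u q hq)

theorem IsPrimeIn.mem_of_mul_self_eq_zero (hP : IsPrimeIn R P)
    (hRP : (R : Set A) = stabilizerSet P) (hinv : ∀ u : Aˣ, ∀ p ∈ P, (u : A) * p * (↑u⁻¹ : A) ∈ P)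
    (hone : (1 : A) ∉ P) {n : A} (hn : n * n = 0) : n ∈ R := by
  let u : Aˣ :=
    ⟨1 - n, 1 + n, by simp [sub_mul, mul_add, hn], by simp [add_mul, mul_sub, hn]⟩
  have hu : (u : A) ∉ P := by
    rw [show (u : A) = 1 + -n by simp [u, sub_eq_add_neg]]
    exact hP.1.one_add_notMem_of_mul_self_eq_zero hone (by rw [neg_mul_neg, hn])
  simpa [u] using R.sub_mem (hP.inv_mem_of_notMem hRP hinv hu) R.one_mem

theorem IsPrimeIn.mul_mul_one_sub_mem_of_mem_CP (hP : IsPrimeIn R P)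
    (hRP : (R : Set A) = stabilizerSet P) (hinv : ∀ u : Aˣ, ∀ p ∈ P, (u : A) * p * (↑u⁻¹ : A) ∈ P)
    (hone : (1 : A) ∉ P) {c k : A} (hc : c ∈ CP R P) (hk : IsIdempotentElem k) (hck : c * k = 0)
    (x : A) : k * x * (1 - k) ∈ P := by
  have hsq : k * x * (1 - k) * (k * x * (1 - k)) = 0 := by
    rw [show k * x * (1 - k) * (k * x * (1 - k)) = k * x * ((1 - k) * k) * (x * (1 - k)) by
      simp only [mul_assoc], sub_mul, one_mul, hk.eq, sub_self, mul_zero, zero_mul]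
  refine hc.2.1 _ (hP.mem_of_mul_self_eq_zero hRP hinv hone hsq) ?_
  rw [← mul_assoc, ← mul_assoc, hck, zero_mul, zero_mul]
  exact hP.1.2.1

theorem IsPrimeIn.isUnit_of_mem_CP [IsSemisimpleRing A] (hP : IsPrimeIn R P)
    (hRP : (R : Set A) = stabilizerSet P) (hinv : ∀ u : Aˣ, ∀ p ∈ P, (u : A) * p * (↑u⁻¹ : A) ∈ P)
    (hint : ⋂ n : ℕ, idealPow P (n + 1) ⊆ {0}) {c : A} (hc : c ∈ CP R P) : IsUnit c := by
  nontriviality A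
  have hone := one_notMem_of_iInter_idealPow_subset hint
  obtain ⟨a, ha⟩ := IsSemisimpleRing.exists_mul_mul_eq_self c
  have he : IsIdempotentElem (a * c) := by
    rw [IsIdempotentElem, mul_assoc, ← mul_assoc c, ha]
  have hck : c * (1 - a * c) = 0 := by rw [mul_sub, mul_one, ← mul_assoc, ha, sub_self]
  rcases hP.2 _ _ fun r _ => hP.mul_mul_one_sub_mem_of_mem_CP hRP hinv hone hc he.one_sub hck r
    with hk | hk
  · exact .of_mul_eq_one_right a (sub_eq_zero.mp (he.one_sub.eq_zero_of_mem hint hk)).symm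
  · rw [sub_sub_cancel] at hk
    refine absurd ?_ (notMem_of_mem_CP hone hc)
    rw [← ha, mul_assoc]
    exact hP.1.2.2.2.2.1 _ hc.1 _ hk

theorem IsUnit.mem_regularIn {c : A} (hcR : c ∈ R) (hc : IsUnit c) : c ∈ regularIn R :=
  ⟨hcR, fun _ _ h => hc.isRegular.left (h.trans (mul_zero c).symm),
    fun _ _ h => hc.isRegular.right (h.trans (zero_mul c).symm)⟩

theorem IsUnit.exists_mem_mul_eq_mul (hRP : (R : Set A) = stabilizerSet P)
    (hinv : ∀ u : Aˣ, ∀ p ∈ P, (u : A) * p * (↑u⁻¹ : A) ∈ P) {c r : A} (hc : IsUnit c)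
    (hr : r ∈ R) : ∃ r' ∈ R, c * r = r' * c := by
  obtain ⟨u, rfl⟩ := hc
  exact ⟨u * r * ↑u⁻¹, hRP.ge (conj_mem_stabilizerSet hinv u (hRP.subset hr)), by simp [mul_assoc]⟩

theorem IsUnit.exists_mem_mul_eq_mul' (hRP : (R : Set A) = stabilizerSet P)
    (hinv : ∀ u : Aˣ, ∀ p ∈ P, (u : A) * p * (↑u⁻¹ : A) ∈ P) {c r : A} (hc : IsUnit c)
    (hr : r ∈ R) : ∃ r' ∈ R, r * c = c * r' := by
  obtain ⟨u, rfl⟩ := hc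
  refine ⟨↑u⁻¹ * r * u, ?_, by simp [mul_assoc]⟩
  simpa using hRP.ge (conj_mem_stabilizerSet hinv u⁻¹ (hRP.subset hr))

end

theorem statement_7_general {A : Type*} [Ring A] [IsSimpleRing A] [IsArtinianRing A]
    (R : Subring A) (P : Set A)
    (hprime : IsStrictFractionalPrime R P)
    (hRP : (R : Set A) = stabilizerSet P)
    (hinv : ∀ u : Aˣ, ∀ p ∈ P, (u : A) * p * (↑u⁻¹ : A) ∈ P)
    (hint : (⋂ n : ℕ, idealPow P (n + 1)) = {0}) :
    (∀ p ∈ P, ∃ w ∈ R, (1 + p) * w = 1 ∧ w * (1 + p) = 1) ∧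
    (∀ c ∈ CP R P, c ∈ regularIn R) ∧
    (∀ r ∈ R, ∀ c ∈ CP R P, ∃ r' ∈ R, ∃ c' ∈ CP R P, c' * r = r' * c) ∧
    (∀ r ∈ R, ∀ c ∈ CP R P, ∃ r' ∈ R, ∃ c' ∈ CP R P, r * c' = c * r') := by
  obtain ⟨hP, -⟩ := hprime
  have hone : (1 : A) ∉ P := one_notMem_of_iInter_idealPow_subset hint.subset
  have hunit : ∀ c ∈ CP R P, IsUnit c := fun c hc =>
    hP.isUnit_of_mem_CP hRP hinv hint.subset hc
  refine ⟨fun p hp => ?_, fun c hc => (hunit c hc).mem_regularIn hc.1,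
    fun r hr c hc => ?_, fun r hr c hc => ?_⟩
  · have h1p := hP.1.one_add_mem_CP hp
    obtain ⟨u, hu⟩ := hunit _ h1p
    have huP : (u : A) ∉ P := hu ▸ notMem_of_mem_CP hone h1p
    exact ⟨_, hP.inv_mem_of_notMem hRP hinv huP, hu ▸ u.mul_inv, hu ▸ u.inv_mul⟩
  · obtain ⟨r', hr', h⟩ := (hunit c hc).exists_mem_mul_eq_mul hRP hinv hr
    exact ⟨r', hr', c, hc, h⟩
  · obtain ⟨r', hr', h⟩ := (hunit c hc).exists_mem_mul_eq_mul' hRP hinv hr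
    exact ⟨r', hr', c, hc, h⟩

theorem statement_7 {A : Type*} [Ring A] [IsSimpleRing A] [IsArtinianRing A]
    (R : Subring A) (P : Set A)
    (hprime : IsStrictFractionalPrime R P)
    (hRP : (R : Set A) = stabilizerSet P)
    (hGoldie : IsGoldieRing R)
    (hinv : ∀ u : Aˣ, ∀ p ∈ P, (u : A) * p * (↑u⁻¹ : A) ∈ P)
    (hint : (⋂ n : ℕ, idealPow P (n + 1)) = {0}) :
    (∀ p ∈ P, ∃ w ∈ R, (1 + p) * w = 1 ∧ w * (1 + p) = 1) ∧
    (∀ c ∈ CP R P, c ∈ regularIn R) ∧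
    (∀ r ∈ R, ∀ c ∈ CP R P, ∃ r' ∈ R, ∃ c' ∈ CP R P, c' * r = r' * c) ∧
    (∀ r ∈ R, ∀ c ∈ CP R P, ∃ r' ∈ R, ∃ c' ∈ CP R P, r * c' = c * r') :=
  statement_7_general R P hprime hRP hinv hint
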